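/- Let N ≥ 2 be an integer and α > −2 a real number with N > 10 + 4α, and let γ satisfy γ(N,α) ≤ γ < 0, where γ(N,α) := 2 − N/2 + α/2 + √((α+2)(α+2N−2))/2. Then g(r) := r^γ − 1 satisfies ∫₀¹ r^{N−1}(g(r)² + g'(r)²) dr < ∞, g is unbounded on (0,1], and the semi-stability inequality holds for the power nonlinearity: for every Lipschitz function φ : (0,1) → ℝ with compact support in (0,1), ∫₀¹ r^{N−1} φ'(r)² dr ≥ (−γ+α+2)(γ+N−2)·∫₀¹ r^{N−3} φ(r)² dr. -/

import Mathlib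

open MeasureTheory Set Filter Topology


lemma key_ftc (h : ℝ → ℝ) (K : ℝ) (hcont : Continuous h) (hsupp : HasCompactSupport h)
    (hlip : ∀ x y, |h x - h y| ≤ K * |x - y|)
    (hdiff : ∀ᵐ x : ℝ, DifferentiableAt ℝ h x) :
    ∫ x : ℝ, deriv h x = 0 := by
  obtain ⟨R, hR⟩ := hsupp.isBounded.subset_closedBall 0
  set F : ℕ → ℝ → ℝ := fun n x => ((n : ℝ) + 1) * (h (x + ((n : ℝ) + 1)⁻¹) - h x) with hF
  have hK0 : 0 ≤ K := by
    have := hlip 0 1; simp at this; nlinarith [abs_nonneg (h 0 - h 1)]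
  have hInt : Integrable h := hcont.integrable_of_hasCompactSupport hsupp
  have hFint : ∀ n, ∫ x : ℝ, F n x = 0 := by
    intro n
    have h1 : Integrable (fun x => h (x + ((n : ℝ) + 1)⁻¹)) := hInt.comp_add_right _
    rw [hF]
    simp only
    rw [integral_const_mul, integral_sub h1 hInt,
      integral_add_right_eq_self h (((n : ℝ) + 1)⁻¹), sub_self, mul_zero]
  have hbound : ∀ n x, |F n x| ≤ Set.indicator (Icc (-R - 1) R) (fun _ => K) x := by
    intro n x
    have hu0 : (0:ℝ) < ((n : ℝ) + 1)⁻¹ := by positivity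
    have hu1 : ((n : ℝ) + 1)⁻¹ ≤ 1 := by
      rw [inv_le_one_iff₀]; right; linarith [Nat.cast_nonneg (α := ℝ) n]
    by_cases hx : x ∈ Icc (-R - 1) R
    · rw [Set.indicator_of_mem hx]
      have := hlip (x + ((n : ℝ) + 1)⁻¹) x
      simp only [add_sub_cancel_left, abs_of_pos hu0] at this
      calc |F n x| = ((n : ℝ) + 1) * |h (x + ((n : ℝ) + 1)⁻¹) - h x| := by
            rw [hF]; simp only [abs_mul]
            congr 1
            rw [abs_of_pos]; positivity
        _ ≤ ((n : ℝ) + 1) * (K * ((n : ℝ) + 1)⁻¹) := by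
            apply mul_le_mul_of_nonneg_left this; positivity
        _ = K := by field_simp
    · rw [Set.indicator_of_notMem hx]
      have hxz : h x = 0 := by
        apply image_eq_zero_of_notMem_tsupport
        intro hmem
        have := hR hmem
        rw [Real.closedBall_eq_Icc, zero_sub, zero_add] at this
        exact hx ⟨by linarith [this.1], this.2⟩
      have hxz' : h (x + ((n : ℝ) + 1)⁻¹) = 0 := by
        apply image_eq_zero_of_notMem_tsupport
        intro hmem
        have := hR hmem
        rw [Real.closedBall_eq_Icc, zero_sub, zero_add] at this
        simp only [Set.mem_Icc, not_and_or, not_le] at hx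
        rcases hx with hx | hx
        · linarith [this.1]
        · linarith [this.2]
      rw [hF]; simp [hxz, hxz']
  have hgint : Integrable (Set.indicator (Icc (-R - 1) R) (fun _ : ℝ => K)) := by
    rw [integrable_indicator_iff measurableSet_Icc]
    exact integrableOn_const measure_Icc_lt_top.ne
  have htend : ∀ᵐ x : ℝ, Tendsto (fun n => F n x) atTop (𝓝 (deriv h x)) := by
    filter_upwards [hdiff] with x hx
    have hder := hx.hasDerivAt
    rw [hasDerivAt_iff_tendsto_slope] at hder
    have hseq : Tendsto (fun n : ℕ => x + ((n : ℝ) + 1)⁻¹) atTop (𝓝[≠] x) := by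
      apply tendsto_nhdsWithin_of_tendsto_nhds_of_eventually_within
      · have : Tendsto (fun n : ℕ => ((n : ℝ) + 1)⁻¹) atTop (𝓝 0) :=
          tendsto_one_div_add_atTop_nhds_zero_nat.congr (by intro n; rw [one_div])
        simpa using tendsto_const_nhds.add this
      · filter_upwards with n
        have : (0:ℝ) < ((n : ℝ) + 1)⁻¹ := by positivity
        simp only [Set.mem_compl_iff, Set.mem_singleton_iff]
        intro hc
        nlinarith [add_left_cancel (a := x) (b := ((n:ℝ)+1)⁻¹) (c := 0)]
    have := hder.comp hseq
    apply this.congr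
    intro n
    have hne : ((n : ℝ) + 1) ≠ 0 := by positivity
    have hne : ((n : ℝ) + 1) ≠ 0 := by positivity
    simp only [Function.comp_apply, hF, slope_def_field, add_sub_cancel_left]
    rw [div_eq_mul_inv, inv_inv]
    ring
  have hmeas : ∀ n, AEStronglyMeasurable (F n) volume := by
    intro n
    exact ((continuous_const.mul ((hcont.comp (continuous_id.add continuous_const)).sub
      hcont))).aestronglyMeasurable
  have := tendsto_integral_of_dominated_convergence _ hmeas hgint
    (fun n => Filter.Eventually.of_forall (hbound n)) htend
  rw [show (fun n => ∫ x : ℝ, F n x) = (fun n => (0:ℝ)) from funext hFint] at this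
  exact (tendsto_nhds_unique tendsto_const_nhds this).symm


lemma pow_lip_aux (m : ℕ) : ∀ a b : ℝ, |a| ≤ 1 → |b| ≤ 1 → |a^m - b^m| ≤ m * |a - b| := by
  induction m with
  | zero => intro a b _ _; simp
  | succ m ih =>
    intro a b ha hb
    have h1 : a^(m+1) - b^(m+1) = a * (a^m - b^m) + (a - b) * b^m := by ring
    have h2 : |b^m| ≤ 1 := by rw [abs_pow]; exact pow_le_one₀ (abs_nonneg b) hb
    calc |a^(m+1) - b^(m+1)| ≤ |a * (a^m - b^m)| + |(a-b) * b^m| := by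
          rw [h1]; exact abs_add_le _ _
      _ ≤ 1 * (m * |a - b|) + |a - b| * 1 := by
          gcongr
          · rw [abs_mul]
            exact mul_le_mul ha (ih a b ha hb) (abs_nonneg _) zero_le_one
          · rw [abs_mul]; exact mul_le_mul_of_nonneg_left h2 (abs_nonneg _)
      _ = (↑(m+1)) * |a - b| := by push_cast; ring

noncomputable def clamp (x : ℝ) : ℝ := max 0 (min x 1)

lemma clamp_mem (x : ℝ) : clamp x ∈ Icc (0:ℝ) 1 :=
  ⟨le_max_left _ _, max_le (by norm_num) (min_le_right _ _)⟩

lemma clamp_lip (x y : ℝ) : |clamp x - clamp y| ≤ |x - y| := by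
  unfold clamp
  calc |max 0 (min x 1) - max 0 (min y 1)| = |max (min x 1) 0 - max (min y 1) 0| := by
        rw [max_comm, max_comm (min y 1)]
    _ ≤ |min x 1 - min y 1| := abs_max_sub_max_le_abs _ _ _
    _ ≤ max |x - y| |1 - 1| := abs_min_sub_min_le_max _ _ _ _
    _ = |x - y| := by simp

lemma clamp_eq {x : ℝ} (hx : x ∈ Icc (0:ℝ) 1) : clamp x = x := by
  unfold clamp
  rw [min_eq_left hx.2, max_eq_right hx.1]

lemma deriv_abs_le {K : NNReal} {φ : ℝ → ℝ} (h : LipschitzWith K φ) (x : ℝ) :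
    |deriv φ x| ≤ K := by
  by_cases hd : DifferentiableAt ℝ φ x
  · have hder := hd.hasDerivAt
    rw [hasDerivAt_iff_tendsto_slope] at hder
    have habs : Tendsto (fun y => |slope φ x y|) (𝓝[≠] x) (𝓝 |deriv φ x|) :=
      (continuous_abs.tendsto _).comp hder
    apply le_of_tendsto habs
    filter_upwards [self_mem_nhdsWithin] with y hy
    have hxy : y - x ≠ 0 := sub_ne_zero.2 hy
    rw [slope_def_field, div_eq_mul_inv, abs_mul, abs_inv]
    rw [show φ y - φ x = φ y - φ x from rfl]
    have hlip : |φ y - φ x| ≤ K * |y - x| := by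
      have := h.dist_le_mul y x
      rwa [Real.dist_eq, Real.dist_eq] at this
    calc |φ y - φ x| * |y - x|⁻¹ ≤ (K * |y - x|) * |y - x|⁻¹ := by
          gcongr
      _ = K := by field_simp [abs_ne_zero.2 hxy]
  · rw [deriv_zero_of_not_differentiableAt hd]
    simp


lemma const_le (N : ℕ) (α γ : ℝ) (hN3 : 3 ≤ N) (hα : -2 < α)
    (hγ₁ : 2 - (N : ℝ) / 2 + α / 2 + Real.sqrt ((α + 2) * (α + 2 * (N : ℝ) - 2)) / 2 ≤ γ) :
    (-γ + α + 2) * (γ + (N : ℝ) - 2) ≤ (((N:ℝ) - 2)/2)^2 := by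
  have hN3' : (3:ℝ) ≤ (N:ℝ) := by exact_mod_cast hN3
  set s := Real.sqrt ((α + 2) * (α + 2 * (N : ℝ) - 2)) with hs
  have hs2 : s^2 = (α + 2) * (α + 2 * (N : ℝ) - 2) := Real.sq_sqrt (by nlinarith)
  have hs0 : 0 ≤ s := Real.sqrt_nonneg _
  have h1 : 0 ≤ γ - (2 - (N:ℝ)/2 + α/2 + s/2) := by linarith
  have h2 : 0 ≤ γ - (2 - (N:ℝ)/2 + α/2 - s/2) := by linarith
  nlinarith [mul_nonneg h1 h2]

lemma part1 (N : ℕ) (γ : ℝ) (hN3 : 3 ≤ N) (hγneg : γ < 0)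
    (hexp : -1 < (N:ℝ) - 3 + 2*γ) :
    IntegrableOn (fun r : ℝ => r ^ ((N : ℝ) - 1) *
      ((r ^ γ - 1) ^ 2 + (deriv (fun s : ℝ => s ^ γ - 1) r) ^ 2)) (Ioc 0 1) := by
  have hg : IntegrableOn (fun r : ℝ => (1 + γ^2) * r ^ ((N:ℝ) - 3 + 2*γ)) (Ioc 0 1) := by
    have := intervalIntegral.intervalIntegrable_rpow' (a := 0) (b := 1) hexp
    rw [intervalIntegrable_iff_integrableOn_Ioc_of_le (by norm_num)] at this
    exact this.const_mul _
  apply Integrable.mono' hg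
  · apply Measurable.aestronglyMeasurable
    apply Measurable.mul
    · exact (measurable_id.pow_const _)
    · apply Measurable.add
      · exact (((measurable_id.pow_const _)).sub measurable_const).pow measurable_const
      · exact (measurable_deriv _).pow measurable_const
  · rw [ae_restrict_iff' measurableSet_Ioc]
    filter_upwards with r hr
    obtain ⟨hr0, hr1⟩ := hr
    have hd : deriv (fun s : ℝ => s ^ γ - 1) r = γ * r ^ (γ - 1) := by
      have h1 : deriv (fun s : ℝ => s ^ γ - 1) r = deriv (fun s : ℝ => s ^ γ) r := by
        simp [deriv_sub_const]
      rw [h1, Real.deriv_rpow_const r γ]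
    rw [hd]
    have hr1γ : (1:ℝ) ≤ r ^ γ := by
      rw [show (1:ℝ) = r ^ (0:ℝ) by simp [Real.rpow_zero]]
      exact Real.rpow_le_rpow_of_exponent_ge hr0 hr1 hγneg.le
    have hsq1 : (r ^ γ - 1)^2 ≤ r ^ (2*γ) := by
      have : (r ^ γ - 1)^2 ≤ (r ^ γ)^2 := by nlinarith
      calc (r ^ γ - 1)^2 ≤ (r ^ γ)^2 := this
        _ = r ^ (2*γ) := by
            rw [← Real.rpow_natCast (r ^ γ) 2, ← Real.rpow_mul hr0.le]
            norm_num [mul_comm]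
    have hsq2 : (γ * r ^ (γ-1))^2 = γ^2 * r ^ (2*γ-2) := by
      rw [mul_pow, ← Real.rpow_natCast (r ^ (γ-1)) 2, ← Real.rpow_mul hr0.le]
      norm_num
      left
      rw [show (γ-1)*2 = 2*γ-2 by ring]
    have hnonneg : (0:ℝ) ≤ r ^ ((N:ℝ) - 1) := (Real.rpow_pos_of_pos hr0 _).le
    rw [Real.norm_eq_abs, abs_of_nonneg (by positivity)]
    have hmono : r ^ ((N:ℝ) - 1 + 2*γ) ≤ r ^ ((N:ℝ) - 3 + 2*γ) :=
      Real.rpow_le_rpow_of_exponent_ge hr0 hr1 (by linarith)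
    calc r ^ ((N:ℝ) - 1) * ((r ^ γ - 1)^2 + (γ * r ^ (γ-1))^2)
        ≤ r ^ ((N:ℝ) - 1) * (r ^ (2*γ) + γ^2 * r ^ (2*γ-2)) := by
          rw [hsq2]; gcongr
      _ = r ^ ((N:ℝ) - 1 + 2*γ) + γ^2 * r ^ ((N:ℝ) - 1 + (2*γ-2)) := by
          rw [mul_add, ← Real.rpow_add hr0, mul_comm (r ^ ((N:ℝ)-1)) (γ^2 * r ^ (2*γ-2)),
            mul_assoc, ← Real.rpow_add hr0, add_comm (2*γ-2)]
      _ ≤ r ^ ((N:ℝ) - 3 + 2*γ) + γ^2 * r ^ ((N:ℝ) - 3 + 2*γ) := by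
          rw [show (N:ℝ) - 1 + (2*γ-2) = (N:ℝ) - 3 + 2*γ by ring]
          gcongr
      _ = (1 + γ^2) * r ^ ((N:ℝ) - 3 + 2*γ) := by ring


lemma part2 (γ : ℝ) (hγ : γ < 0) : ¬ ∃ M : ℝ, ∀ r ∈ Set.Ioc (0:ℝ) 1, |r ^ γ - 1| ≤ M := by
  rintro ⟨M, hM⟩
  set B : ℝ := max M 0 + 2 with hB
  have hB1 : 1 < B := by
    have : (0:ℝ) ≤ max M 0 := le_max_right M 0
    linarith
  set r : ℝ := B ^ (1/γ) with hr
  have hr0 : 0 < r := Real.rpow_pos_of_pos (by linarith) _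
  have hr1 : r ≤ 1 :=
    (Real.rpow_lt_one_of_one_lt_of_neg hB1 (by
      rw [one_div]; exact inv_neg''.2 hγ)).le
  have hrγ : r ^ γ = B := by
    rw [hr, ← Real.rpow_mul (by linarith : (0:ℝ) ≤ B), one_div, inv_mul_cancel₀ hγ.ne,
      Real.rpow_one]
  have := hM r ⟨hr0, hr1⟩
  rw [hrγ] at this
  have h1 : B - 1 ≤ |B - 1| := le_abs_self _
  have h2 : M ≤ max M 0 := le_max_left M 0
  linarith



lemma hardy (m : ℕ) (φ : ℝ → ℝ) (K : NNReal) (hlip : LipschitzWith K φ)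
    (hφc : HasCompactSupport φ) (hsupp : tsupport φ ⊆ Set.Ioo 0 1) :
    (((m:ℝ)+1)/2)^2 * (∫ r in Set.Ioo (0:ℝ) 1, r ^ m * (φ r) ^ 2) ≤
      ∫ r in Set.Ioo (0:ℝ) 1, r ^ (m+2) * (deriv φ r) ^ 2 := by
  have hφcont : Continuous φ := hlip.continuous
  obtain ⟨M, hM⟩ := hφc.exists_bound_of_continuous hφcont
  have hM0 : 0 ≤ M := le_trans (norm_nonneg _) (hM 0)
  set c : ℝ := ((m:ℝ)+1)/2 with hc
  -- the auxiliary function h = φ² · clamp^(m+1)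
  set p : ℝ → ℝ := fun r => (clamp r)^(m+1) with hp
  set h : ℝ → ℝ := fun r => (φ r)^2 * p r with hh
  have hpcont : Continuous p := by
    rw [hp]; unfold clamp
    exact (continuous_const.max (continuous_id.min continuous_const)).pow _
  have hpbd : ∀ x, |p x| ≤ 1 := by
    intro x
    rw [hp, abs_pow]
    apply pow_le_one₀ (abs_nonneg _)
    have := clamp_mem x
    rw [abs_le]; constructor <;> [linarith [this.1]; exact this.2]
  have hclbd : ∀ x, |clamp x| ≤ 1 := by
    intro x; have := clamp_mem x
    rw [abs_le]; constructor <;> [linarith [this.1]; exact this.2]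
  have hplip : ∀ x y, |p x - p y| ≤ ((m:ℝ)+1) * |x - y| := by
    intro x y
    calc |p x - p y| ≤ ((m+1 : ℕ):ℝ) * |clamp x - clamp y| :=
          pow_lip_aux (m+1) _ _ (hclbd x) (hclbd y)
      _ ≤ ((m:ℝ)+1) * |x - y| := by
          push_cast
          exact mul_le_mul_of_nonneg_left (clamp_lip x y) (by positivity)
  have hhcont : Continuous h := (hφcont.pow 2).mul hpcont
  have hsupp_h : Function.support h ⊆ Function.support φ := by
    intro x hx
    simp only [hh, Function.mem_support, ne_eq] at hx ⊢
    intro h0; apply hx; rw [h0]; ring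
  have hhc : HasCompactSupport h := hφc.mono hsupp_h
  have htsupp_h : tsupport h ⊆ Set.Ioo 0 1 :=
    (closure_mono hsupp_h).trans hsupp
  have hhlip : ∀ x y, |h x - h y| ≤ (M^2 * ((m:ℝ)+1) + 2*M*K) * |x - y| := by
    intro x y
    have hkey : h x - h y = (φ x)^2 * (p x - p y) + p y * ((φ x)^2 - (φ y)^2) := by
      rw [hh]; ring
    have hφx : |φ x| ≤ M := by have := hM x; rwa [Real.norm_eq_abs] at this
    have hφy : |φ y| ≤ M := by have := hM y; rwa [Real.norm_eq_abs] at this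
    have hφlip : |φ x - φ y| ≤ K * |x - y| := by
      have := hlip.dist_le_mul x y
      rwa [Real.dist_eq, Real.dist_eq] at this
    calc |h x - h y| ≤ |(φ x)^2 * (p x - p y)| + |p y * ((φ x)^2 - (φ y)^2)| := by
          rw [hkey]; exact abs_add_le _ _
      _ ≤ M^2 * (((m:ℝ)+1) * |x - y|) + 1 * (|φ x + φ y| * (K * |x - y|)) := by
          gcongr
          · rw [abs_mul, abs_pow]
            apply mul_le_mul _ (hplip x y) (abs_nonneg _) (by positivity)
            exact pow_le_pow_left₀ (abs_nonneg _) hφx 2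
          · rw [abs_mul]
            apply mul_le_mul (hpbd y) _ (abs_nonneg _) zero_le_one
            rw [show (φ x)^2 - (φ y)^2 = (φ x + φ y) * (φ x - φ y) by ring, abs_mul]
            exact mul_le_mul_of_nonneg_left hφlip (abs_nonneg _)
      _ ≤ M^2 * (((m:ℝ)+1) * |x - y|) + 1 * ((2*M) * (K * |x - y|)) := by
          gcongr
          calc |φ x + φ y| ≤ |φ x| + |φ y| := abs_add_le _ _
            _ ≤ 2*M := by linarith
      _ = (M^2 * ((m:ℝ)+1) + 2*M*K) * |x - y| := by ring
  have hhdiff : ∀ᵐ x : ℝ, DifferentiableAt ℝ h x := by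
    filter_upwards [hlip.ae_differentiableAt] with x hx
    by_cases hxs : x ∈ tsupport φ
    · have hxIoo := hsupp hxs
      have hev : h =ᶠ[𝓝 x] fun r => (φ r)^2 * r^(m+1) := by
        filter_upwards [isOpen_Ioo.mem_nhds hxIoo] with r hr
        rw [hh, hp]
        simp only
        rw [clamp_eq ⟨hr.1.le, hr.2.le⟩]
      rw [hev.differentiableAt_iff]
      exact ((hx.pow 2).mul (differentiableAt_pow (m+1)))
    · have hev : h =ᶠ[𝓝 x] fun _ => (0:ℝ) := by
        filter_upwards [notMem_tsupport_iff_eventuallyEq.1 hxs] with r hr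
        have hr0 : φ r = 0 := hr
        simp [hh, hr0]
      rw [hev.differentiableAt_iff]
      exact differentiableAt_const 0
  -- formula for deriv h on Ioo 0 1
  have hform : ∀ᵐ r : ℝ, r ∈ Set.Ioo (0:ℝ) 1 → deriv h r =
      2 * (r^(m+1) * (φ r * deriv φ r)) + ((m:ℝ)+1) * (r^m * (φ r)^2) := by
    filter_upwards [hlip.ae_differentiableAt] with r hr hrIoo
    have hev : h =ᶠ[𝓝 r] fun s => (φ s)^2 * s^(m+1) := by
      filter_upwards [isOpen_Ioo.mem_nhds hrIoo] with s hs
      rw [hh, hp]; simp only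
      rw [clamp_eq ⟨hs.1.le, hs.2.le⟩]
    rw [hev.deriv_eq]
    have hd1 : HasDerivAt (fun s => (φ s)^2) (2 * φ r ^ 1 * deriv φ r) r :=
      (hr.hasDerivAt).pow 2
    have hd2 : HasDerivAt (fun s : ℝ => s^(m+1)) (((m:ℕ)+1) * r^m) r := by
      simpa using hasDerivAt_pow (m+1) r
    have := (hd1.mul hd2).deriv
    rw [show (fun s => (φ s)^2 * s^(m+1)) = ((fun s => (φ s)^2) * fun s : ℝ => s^(m+1)) from rfl,
      this]; push_cast; ring
  -- key FTC
  have hftc : ∫ x : ℝ, deriv h x = 0 :=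
    key_ftc h _ hhcont hhc hhlip hhdiff
  have hftc' : ∫ r in Set.Ioo (0:ℝ) 1, deriv h r = 0 := by
    rw [setIntegral_eq_integral_of_forall_compl_eq_zero, hftc]
    intro x hx
    have hxs : x ∉ tsupport h := fun hc => hx (htsupp_h hc)
    have hev : h =ᶠ[𝓝 x] fun _ => (0:ℝ) := by
      filter_upwards [notMem_tsupport_iff_eventuallyEq.1 hxs] with r hr
      exact hr
    rw [hev.deriv_eq, deriv_const]
  -- integrability
  have hmeasφ : Measurable φ := hφcont.measurable
  have hmeasdφ : Measurable (deriv φ) := measurable_deriv φ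
  have hvol : volume (Set.Ioo (0:ℝ) 1) < ⊤ := measure_Ioo_lt_top
  have hbd : ∀ (f : ℝ → ℝ) (C : ℝ), Measurable f →
      (∀ r ∈ Set.Ioo (0:ℝ) 1, ‖f r‖ ≤ C) → IntegrableOn f (Set.Ioo 0 1) := by
    intro f C hfm hfb
    apply Integrable.mono' (g := fun _ => C)
    · exact integrableOn_const hvol.ne
    · exact hfm.aestronglyMeasurable
    · rw [ae_restrict_iff' measurableSet_Ioo]
      filter_upwards with r hr using hfb r hr
  have hpow_le : ∀ (k : ℕ) (r : ℝ), r ∈ Set.Ioo (0:ℝ) 1 → |r ^ k| ≤ 1 := by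
    intro k r hr
    rw [abs_pow]
    exact pow_le_one₀ (abs_nonneg r) (abs_le.2 ⟨by linarith [hr.1], hr.2.le⟩)
  have hI1 : IntegrableOn (fun r : ℝ => r^(m+2) * (deriv φ r)^2) (Set.Ioo 0 1) := by
    apply hbd (fun r : ℝ => r^(m+2) * (deriv φ r)^2) (1 * (K:ℝ)^2) ((measurable_id.pow_const _).mul (hmeasdφ.pow_const 2))
    intro r hr
    rw [Real.norm_eq_abs, abs_mul, abs_pow (deriv φ r)]
    exact mul_le_mul (hpow_le _ r hr) (pow_le_pow_left₀ (abs_nonneg _) (deriv_abs_le hlip r) 2)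
      (by positivity) zero_le_one
  have hI2 : IntegrableOn (fun r : ℝ => r^(m+1) * (φ r * deriv φ r)) (Set.Ioo 0 1) := by
    apply hbd (fun r : ℝ => r^(m+1) * (φ r * deriv φ r)) (1 * (M * (K:ℝ)))
      ((measurable_id.pow_const _).mul (hmeasφ.mul hmeasdφ))
    intro r hr
    rw [Real.norm_eq_abs, abs_mul, abs_mul]
    apply mul_le_mul (hpow_le _ r hr) _ (by positivity) zero_le_one
    apply mul_le_mul _ (deriv_abs_le hlip r) (abs_nonneg _) hM0
    have := hM r; rwa [Real.norm_eq_abs] at this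
  have hI3 : IntegrableOn (fun r : ℝ => r^m * (φ r)^2) (Set.Ioo 0 1) := by
    apply hbd (fun r : ℝ => r^m * (φ r)^2) (1 * M^2) ((measurable_id.pow_const _).mul (hmeasφ.pow_const 2))
    intro r hr
    rw [Real.norm_eq_abs, abs_mul, abs_pow (φ r)]
    apply mul_le_mul (hpow_le _ r hr) _ (by positivity) zero_le_one
    apply pow_le_pow_left₀ (abs_nonneg _) _ 2
    have := hM r; rwa [Real.norm_eq_abs] at this
  set A : ℝ := ∫ r in Set.Ioo (0:ℝ) 1, r^(m+1) * (φ r * deriv φ r) with hA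
  set I3 : ℝ := ∫ r in Set.Ioo (0:ℝ) 1, r^m * (φ r)^2 with hI3v
  set I1 : ℝ := ∫ r in Set.Ioo (0:ℝ) 1, r^(m+2) * (deriv φ r)^2 with hI1v
  -- IBP identity : 2A + (m+1) I3 = 0
  have hibp : 2 * A + ((m:ℝ)+1) * I3 = 0 := by
    have := setIntegral_congr_ae measurableSet_Ioo hform
    rw [hftc'] at this
    rw [eq_comm] at this
    rw [integral_add ((hI2.const_mul 2)) ((hI3.const_mul _)), integral_const_mul,
      integral_const_mul] at this
    rw [hA, hI3v]; linarith [this]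
  -- expansion of the square
  have hsq : 0 ≤ I1 + (2*c) * A + c^2 * I3 := by
    have h0 : 0 ≤ ∫ r in Set.Ioo (0:ℝ) 1, r^(m+2) * (deriv φ r + c * φ r / r)^2 := by
      apply setIntegral_nonneg measurableSet_Ioo
      intro r hr
      exact mul_nonneg (pow_nonneg hr.1.le _) (sq_nonneg _)
    have heq : ∫ r in Set.Ioo (0:ℝ) 1, r^(m+2) * (deriv φ r + c * φ r / r)^2 =
        I1 + (2*c) * A + c^2 * I3 := by
      rw [show (fun r : ℝ => r^(m+2) * (deriv φ r + c * φ r / r)^2) =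
          (fun r : ℝ => r^(m+2) * (deriv φ r + c * φ r / r)^2) from rfl]
      have hg2 : Integrable (fun r : ℝ => (2*c) * (r^(m+1) * (φ r * deriv φ r)) +
          c^2 * (r^m * (φ r)^2)) (volume.restrict (Set.Ioo 0 1)) :=
        (hI2.const_mul (2*c)).add (hI3.const_mul (c^2))
      rw [setIntegral_congr_fun measurableSet_Ioo
        (g := fun r => r^(m+2) * (deriv φ r)^2 +
          ((2*c) * (r^(m+1) * (φ r * deriv φ r)) + c^2 * (r^m * (φ r)^2)))]
      · rw [integral_add hI1 hg2,
          integral_add (hI2.const_mul (2*c)) (hI3.const_mul (c^2)),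
          integral_const_mul, integral_const_mul]
        rw [hI1v, hA, hI3v]; ring
      · intro r hr
        have hr0 : r ≠ 0 := ne_of_gt hr.1
        field_simp
        ring
    linarith [heq ▸ h0]
  -- conclude
  have hAval : A = -c * I3 := by rw [hc]; linarith
  rw [hAval] at hsq
  have : c^2 * I3 ≤ I1 := by nlinarith [hsq]
  rw [hc] at this
  exact this


/-- Optimality for `N > 10 + 4α`: for `γ(N,α) ≤ γ < 0`, the function `g(r) = r^γ - 1` is an
unbounded `H¹` function which satisfies the semi-stability inequality for the power
nonlinearity. -/
theorem optimality_dim_gt (N : ℕ) (α γ : ℝ) (hN : 2 ≤ N) (hα : -2 < α)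
    (hdim : (N : ℝ) > 10 + 4 * α)
    (hγ₁ : 2 - (N : ℝ) / 2 + α / 2 +
      Real.sqrt ((α + 2) * (α + 2 * (N : ℝ) - 2)) / 2 ≤ γ)
    (hγ₂ : γ < 0) :
    MeasureTheory.IntegrableOn
      (fun r : ℝ => r ^ ((N : ℝ) - 1) *
        ((r ^ γ - 1) ^ 2 + (deriv (fun s : ℝ => s ^ γ - 1) r) ^ 2)) (Set.Ioc 0 1) ∧
    (¬ ∃ M : ℝ, ∀ r ∈ Set.Ioc (0:ℝ) 1, |r ^ γ - 1| ≤ M) ∧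
    (∀ φ : ℝ → ℝ, (∃ K, LipschitzWith K φ) → HasCompactSupport φ →
      tsupport φ ⊆ Set.Ioo 0 1 →
      (-γ + α + 2) * (γ + (N : ℝ) - 2) *
          (∫ r in Set.Ioo (0:ℝ) 1, r ^ ((N : ℝ) - 3) * (φ r) ^ 2) ≤
        ∫ r in Set.Ioo (0:ℝ) 1, r ^ ((N : ℝ) - 1) * (deriv φ r) ^ 2) := by
  have hs0 : 0 ≤ Real.sqrt ((α + 2) * (α + 2 * (N : ℝ) - 2)) := Real.sqrt_nonneg _
  have h2N : (2:ℝ) < (N:ℝ) := by linarith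
  have hN3 : 3 ≤ N := by
    have : 2 < N := by exact_mod_cast h2N
    omega
  have hexp : -1 < (N:ℝ) - 3 + 2 * γ := by linarith
  refine ⟨part1 N γ hN3 hγ₂ hexp, part2 γ hγ₂, ?_⟩
  rintro φ ⟨K, hlip⟩ hφc hsuppφ
  obtain ⟨m, rfl⟩ : ∃ m, N = m + 3 := ⟨N - 3, by omega⟩
  have hcast3 : ((m + 3 : ℕ) : ℝ) - 3 = ((m : ℕ) : ℝ) := by push_cast; ring
  have hcast1 : ((m + 3 : ℕ) : ℝ) - 1 = ((m + 2 : ℕ) : ℝ) := by push_cast; ring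
  have hI : (∫ r in Set.Ioo (0:ℝ) 1, r ^ (((m+3:ℕ) : ℝ) - 3) * (φ r) ^ 2) =
      ∫ r in Set.Ioo (0:ℝ) 1, r ^ (m : ℕ) * (φ r) ^ 2 := by
    apply setIntegral_congr_fun measurableSet_Ioo
    intro r _
    show r ^ (((m+3:ℕ) : ℝ) - 3) * (φ r) ^ 2 = r ^ (m : ℕ) * (φ r) ^ 2
    rw [hcast3, Real.rpow_natCast]
  have hJ : (∫ r in Set.Ioo (0:ℝ) 1, r ^ (((m+3:ℕ) : ℝ) - 1) * (deriv φ r) ^ 2) =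
      ∫ r in Set.Ioo (0:ℝ) 1, r ^ (m+2 : ℕ) * (deriv φ r) ^ 2 := by
    apply setIntegral_congr_fun measurableSet_Ioo
    intro r _
    show r ^ (((m+3:ℕ) : ℝ) - 1) * (deriv φ r) ^ 2 = r ^ (m+2 : ℕ) * (deriv φ r) ^ 2
    rw [hcast1, Real.rpow_natCast]
  rw [hI, hJ]
  have hIn : 0 ≤ ∫ r in Set.Ioo (0:ℝ) 1, r ^ (m : ℕ) * (φ r) ^ 2 := by
    apply setIntegral_nonneg measurableSet_Ioo
    intro r hr
    exact mul_nonneg (pow_nonneg hr.1.le _) (sq_nonneg _)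
  calc (-γ + α + 2) * (γ + ((m+3:ℕ) : ℝ) - 2) *
        (∫ r in Set.Ioo (0:ℝ) 1, r ^ (m : ℕ) * (φ r) ^ 2)
      ≤ ((((m+3:ℕ):ℝ) - 2)/2)^2 * (∫ r in Set.Ioo (0:ℝ) 1, r ^ (m : ℕ) * (φ r) ^ 2) := by
        apply mul_le_mul_of_nonneg_right _ hIn
        have := const_le (m+3) α γ hN3 hα hγ₁
        calc (-γ + α + 2) * (γ + ((m+3:ℕ) : ℝ) - 2)
            = (-γ + α + 2) * (γ + ((m+3:ℕ) : ℝ) - 2) := rfl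
          _ ≤ _ := this
    _ = (((m:ℝ)+1)/2)^2 * (∫ r in Set.Ioo (0:ℝ) 1, r ^ (m : ℕ) * (φ r) ^ 2) := by
        norm_num
        left
        ring
    _ ≤ ∫ r in Set.Ioo (0:ℝ) 1, r ^ (m+2 : ℕ) * (deriv φ r) ^ 2 :=
        hardy m φ K hlip hφc hsuppφ
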